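/- arXiv:1110.4722 — 2 statements merged into one kernel-verified Lean document; each statement's English description precedes it below -/
import Mathlib

section
/- Let G be a finite group, R a commutative ring, and Φ a conjugation functor on G such that Φ(A) is a group for every subgroup A of G and every structure map is a group homomorphism. Then the R-linear map on the generalised Burnside ring P_R(G) determined on generators by ⟨a, A⟩ ↦ ⟨a⁻¹, A⟩ is well defined and is an involution of P_R(G): an R-linear anti-automorphism of the R-algebra P_R(G) whose square is the identity. -/
/-!
Inverting the second component of the symbols preserves the conjugation relations, because
each `Φ_g` is a group homomorphism, so it descends to `P_R(G)`; uniqueness and `inv ∘ inv = id`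
follow since the generators span. Anti-multiplicativity reduces to two generators. Inverting
representatives of `A\G/B` gives representatives of `B\G/A`, and the inverse of the summand
`⟨Φ_1 a · Φ_{x⁻¹} b, A ∩ xBx⁻¹⟩` is `⟨Φ_{x⁻¹} b⁻¹ · Φ_1 a⁻¹, A ∩ xBx⁻¹⟩`, which is the summand
of `⟨b⁻¹, B⟩⟨a⁻¹, A⟩` at `x⁻¹` conjugated by `x⁻¹`, as `x (B ∩ x⁻¹Ax) x⁻¹ = A ∩ xBx⁻¹`.
-/

/-- The conjugate subgroup `g⁻¹ A g = {x | g * x * g⁻¹ ∈ A}`. -/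
def conjSub {G : Type} [Group G] (g : G) (A : Subgroup G) : Subgroup G where
  carrier := {x | g * x * g⁻¹ ∈ A}
  one_mem' := by simpa using A.one_mem
  mul_mem' := by
    intro a b ha hb
    have ha' : g * a * g⁻¹ ∈ A := ha
    have hb' : g * b * g⁻¹ ∈ A := hb
    show g * (a * b) * g⁻¹ ∈ A
    have h : g * (a * b) * g⁻¹ = (g * a * g⁻¹) * (g * b * g⁻¹) := by group
    rw [h]; exact mul_mem ha' hb'
  inv_mem' := by
    intro a ha
    have ha' : g * a * g⁻¹ ∈ A := ha
    show g * a⁻¹ * g⁻¹ ∈ A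
    have h : g * a⁻¹ * g⁻¹ = (g * a * g⁻¹)⁻¹ := by group
    rw [h]; exact inv_mem ha' 

/-- A contravariant conjugation functor `Φ` on the subgroup category of `G`, valued in
groups: to each subgroup `A` a group `Φ(A)`, and to each `g` with `gAg⁻¹ ⊆ B` a
group homomorphism `Φ_g^{A,B} : Φ(B) → Φ(A)`, functorially, and depending only on the
morphism `γ_g : A → B` (i.e. on `g` modulo the centraliser of `A`). -/
structure ConjFunctorGrp (G : Type) [Group G] where
  obj : Subgroup G → Type
  [gp : ∀ A, Group (obj A)]
  map : ∀ (g : G) (A B : Subgroup G), (∀ x ∈ A, g * x * g⁻¹ ∈ B) → obj B → obj A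
  map_mul : ∀ (g : G) (A B : Subgroup G) (hg : ∀ x ∈ A, g * x * g⁻¹ ∈ B) (b b' : obj B),
    map g A B hg (b * b') = map g A B hg b * map g A B hg b'
  map_id : ∀ (A : Subgroup G) (h : ∀ x ∈ A, (1 : G) * x * 1⁻¹ ∈ A) (a : obj A),
    map 1 A A h a = a
  map_comp : ∀ (g h : G) (A B C : Subgroup G) (hg : ∀ x ∈ A, g * x * g⁻¹ ∈ B)
    (hh : ∀ x ∈ B, h * x * h⁻¹ ∈ C) (hhg : ∀ x ∈ A, (h * g) * x * (h * g)⁻¹ ∈ C)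
    (c : obj C), map g A B hg (map h B C hh c) = map (h * g) A C hhg c
  map_congr : ∀ (g g' : G) (A B : Subgroup G) (hg : ∀ x ∈ A, g * x * g⁻¹ ∈ B)
    (hg' : ∀ x ∈ A, g' * x * g'⁻¹ ∈ B),
    (∀ x ∈ A, (g⁻¹ * g') * x = x * (g⁻¹ * g')) → ∀ b : obj B, map g A B hg b = map g' A B hg' b

attribute [instance] ConjFunctorGrp.gp

variable {G : Type} [Group G]

/-- The free `R`-module on the symbols `⟨a, A⟩`, `A ≤ G`, `a ∈ Φ(A)`. -/
abbrev FreeBurnside (R : Type) [CommRing R] (F : ConjFunctorGrp G) : Type :=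
  (Σ A : Subgroup G, F.obj A) →₀ R

/-- The submodule of relations `⟨a, A⟩ - ⟨Φ_g^{g⁻¹Ag, A}(a), g⁻¹Ag⟩`. -/
noncomputable def burnsideRels (R : Type) [CommRing R] (F : ConjFunctorGrp G) :
    Submodule R (FreeBurnside R F) :=
  Submodule.span R {x | ∃ (g : G) (A : Subgroup G) (a : F.obj A),
    x = Finsupp.single ⟨A, a⟩ (1 : R) -
      Finsupp.single ⟨conjSub g A, F.map g (conjSub g A) A (fun _ hy => hy) a⟩ (1 : R)}

/-- The generalised Burnside ring `P_R(G)` as an `R`-module. -/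
abbrev BurnsideModule (R : Type) [CommRing R] (F : ConjFunctorGrp G) : Type :=
  FreeBurnside R F ⧸ burnsideRels R F

/-- The generator `⟨a, A⟩` of `P_R(G)`. -/
noncomputable def gen (R : Type) [CommRing R] (F : ConjFunctorGrp G) (A : Subgroup G) (a : F.obj A) :
    BurnsideModule R F :=
  Submodule.Quotient.mk (Finsupp.single ⟨A, a⟩ (1 : R))

/-- The summand `⟨Φ_1^{A∩xBx⁻¹,A}(a) · Φ_{x⁻¹}^{A∩xBx⁻¹,B}(b), A∩xBx⁻¹⟩` of the product
`⟨a,A⟩·⟨b,B⟩` corresponding to the double coset `AxB`. -/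
noncomputable def prodTerm (R : Type) [CommRing R] (F : ConjFunctorGrp G) (A B : Subgroup G)
    (a : F.obj A) (b : F.obj B) (x : G) : BurnsideModule R F :=
  gen R F (A ⊓ conjSub x⁻¹ B)
    (F.map 1 (A ⊓ conjSub x⁻¹ B) A
        (fun y hy => by simpa using (Subgroup.mem_inf.mp hy).1) a *
     F.map x⁻¹ (A ⊓ conjSub x⁻¹ B) B
        (fun y hy => (Subgroup.mem_inf.mp hy).2) b)

/-- `X` is a system of representatives of the double cosets `A\G/B`. -/
def IsDosetRep (A B : Subgroup G) (X : Finset G) : Prop :=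
  ∀ g : G, ∃! x : G, x ∈ X ∧ ∃ a ∈ A, ∃ b ∈ B, g = a * x * b

/-- The bilinear map `mul` satisfies the defining double-coset formula of the
multiplication of the generalised Burnside ring, for every choice of double coset
representatives. -/
def MulFormula (R : Type) [CommRing R] (F : ConjFunctorGrp G)
    (mul : BurnsideModule R F →ₗ[R] BurnsideModule R F →ₗ[R] BurnsideModule R F) : Prop :=
  ∀ (A B : Subgroup G) (a : F.obj A) (b : F.obj B) (X : Finset G), IsDosetRep A B X →
    mul (gen R F A a) (gen R F B b) = ∑ x ∈ X, prodTerm R F A B a b x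

/-- `X` is a system of representatives of those left cosets `gB ∈ G/B` with
`g⁻¹ A g ⊆ B`. -/
def IsFixedCosetRep (A B : Subgroup G) (X : Finset G) : Prop :=
  (∀ x ∈ X, ∀ y ∈ A, x⁻¹ * y * x ∈ B) ∧
  (∀ g : G, (∀ y ∈ A, g⁻¹ * y * g ∈ B) → ∃! x : G, x ∈ X ∧ ∃ b ∈ B, g = x * b)

/-- The `R`-linear map `f` satisfies the defining formula of the mark `f_A^α`:
`f ⟨b, B⟩ = ∑ α (Φ_{g⁻¹}^{A,B}(b))`, the sum over representatives `g` of the cosets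
`gB ∈ G/B` with `g⁻¹ A g ⊆ B`, for every choice of representatives. -/
def MarkFormula (R : Type) [CommRing R] (F : ConjFunctorGrp G) (S : Type) [Ring S]
    [Algebra R S] (A : Subgroup G) (α : F.obj A → Sˣ)
    (f : BurnsideModule R F →ₗ[R] S) : Prop :=
  ∀ (B : Subgroup G) (b : F.obj B) (X : Finset G) (hX : IsFixedCosetRep A B X),
    f (gen R F B b) = ∑ x ∈ X.attach,
      ((α (F.map (x : G)⁻¹ A B
        (fun y hy => by simpa using hX.1 x.1 x.2 y hy) b) : Sˣ) : S)

namespace ConjFunctorGrp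

variable (F : ConjFunctorGrp G)

lemma map_inv (g : G) (A B : Subgroup G) (hg : ∀ x ∈ A, g * x * g⁻¹ ∈ B) (b : F.obj B) :
    F.map g A B hg b⁻¹ = (F.map g A B hg b)⁻¹ :=
  (MonoidHom.mk' _ (F.map_mul g A B hg)).map_inv b

lemma map_map_of_mul_eq {g h k : G} (hk : h * g = k) {A B C : Subgroup G}
    (hg : ∀ x ∈ A, g * x * g⁻¹ ∈ B) (hh : ∀ x ∈ B, h * x * h⁻¹ ∈ C)
    (hkAC : ∀ x ∈ A, k * x * k⁻¹ ∈ C) (c : F.obj C) :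
    F.map g A B hg (F.map h B C hh c) = F.map k A C hkAC c := by
  subst hk
  exact F.map_comp g h A B C hg hh hkAC c

end ConjFunctorGrp

lemma mem_conjSub {g : G} {A : Subgroup G} {y : G} : y ∈ conjSub g A ↔ g * y * g⁻¹ ∈ A :=
  Iff.rfl

lemma conjSub_inf_conjSub_inv (g : G) (A B : Subgroup G) :
    conjSub g (B ⊓ conjSub g⁻¹ A) = A ⊓ conjSub g B := by
  ext y
  simp only [mem_conjSub, Subgroup.mem_inf, inv_inv]
  rw [and_comm, show g⁻¹ * (g * y * g⁻¹) * g = y by group]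

section Generators

variable {R : Type} [CommRing R] {F : ConjFunctorGrp G}

lemma gen_eq_gen_conjSub (g : G) (A : Subgroup G) (a : F.obj A) :
    gen R F A a = gen R F (conjSub g A) (F.map g (conjSub g A) A (fun _ => mem_conjSub.mp) a) :=
  (Submodule.Quotient.eq _).mpr (Submodule.subset_span ⟨g, A, a, rfl⟩)

/-- `rw` cannot transport `gen R F S s` along `S = S'`, as the type of `s` depends on `S`. -/
lemma gen_map_mul_map_congr {S S' B C : Subgroup G} (hS : S = S') {g k : G}
    (hg : ∀ y ∈ S, g * y * g⁻¹ ∈ B) (hk : ∀ y ∈ S, k * y * k⁻¹ ∈ C)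
    (hg' : ∀ y ∈ S', g * y * g⁻¹ ∈ B) (hk' : ∀ y ∈ S', k * y * k⁻¹ ∈ C)
    (b : F.obj B) (c : F.obj C) :
    gen R F S (F.map g S B hg b * F.map k S C hk c) =
      gen R F S' (F.map g S' B hg' b * F.map k S' C hk' c) := by
  subst hS
  rfl

/-- `prodTerm` with membership proofs whose types are literally the hypotheses of `F.map`
(the ones in its definition only match up to unfolding `conjSub`), so that `rw` works on it. -/
lemma prodTerm_eq (A B : Subgroup G) (a : F.obj A) (b : F.obj B) (x : G) :
    prodTerm R F A B a b x = gen R F (A ⊓ conjSub x⁻¹ B)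
      (F.map 1 _ A (fun y hy => by simpa using (Subgroup.mem_inf.mp hy).1) a *
        F.map x⁻¹ _ B (fun y hy => mem_conjSub.mp (Subgroup.mem_inf.mp hy).2) b) :=
  rfl

lemma ext_gen {M : Type} [AddCommGroup M] [Module R M] {f f' : BurnsideModule R F →ₗ[R] M}
    (h : ∀ (A : Subgroup G) (a : F.obj A), f (gen R F A a) = f' (gen R F A a)) : f = f' :=
  Submodule.linearMap_qext _ <| Finsupp.lhom_ext' fun s => LinearMap.ext_ring (h s.1 s.2)

lemma ext_gen₂ {M : Type} [AddCommGroup M] [Module R M]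
    {f f' : BurnsideModule R F →ₗ[R] BurnsideModule R F →ₗ[R] M}
    (h : ∀ (A : Subgroup G) (a : F.obj A) (B : Subgroup G) (b : F.obj B),
      f (gen R F A a) (gen R F B b) = f' (gen R F A a) (gen R F B b)) : f = f' :=
  ext_gen fun A a => ext_gen fun B b => h A a B b

end Generators

section Inversion

variable (R : Type) [CommRing R] (F : ConjFunctorGrp G)

lemma burnsideRels_le_comap_inv :
    burnsideRels R F ≤ (burnsideRels R F).comap
      (Finsupp.lmapDomain R R fun s : Σ A : Subgroup G, F.obj A => ⟨s.1, s.2⁻¹⟩) := by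
  rw [burnsideRels, Submodule.span_le]
  rintro _ ⟨g, A, a, rfl⟩
  simp only [SetLike.mem_coe, Submodule.mem_comap, map_sub, Finsupp.lmapDomain_apply,
    Finsupp.mapDomain_single]
  exact Submodule.subset_span ⟨g, A, a⁻¹, F.map_inv g _ A _ a ▸ rfl⟩

noncomputable def burnsideInv : BurnsideModule R F →ₗ[R] BurnsideModule R F :=
  Submodule.mapQ _ _ _ (burnsideRels_le_comap_inv R F)

lemma burnsideInv_gen (A : Subgroup G) (a : F.obj A) :
    burnsideInv R F (gen R F A a) = gen R F A a⁻¹ := by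
  rw [burnsideInv, gen, Submodule.mapQ_apply, Finsupp.lmapDomain_apply,
    Finsupp.mapDomain_single]
  rfl

variable {R F}

lemma burnsideInv_prodTerm (A B : Subgroup G) (a : F.obj A) (b : F.obj B) (x : G) :
    burnsideInv R F (prodTerm R F A B a b x) = prodTerm R F B A b⁻¹ a⁻¹ x⁻¹ := by
  have hU := conjSub_inf_conjSub_inv x⁻¹ A B
  rw [prodTerm_eq, prodTerm_eq, burnsideInv_gen, mul_inv_rev, ← F.map_inv, ← F.map_inv,
    gen_eq_gen_conjSub x⁻¹ (B ⊓ conjSub x⁻¹⁻¹ A), F.map_mul,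
    F.map_map_of_mul_eq (one_mul x⁻¹), F.map_map_of_mul_eq (inv_mul_cancel x⁻¹)]
  · exact gen_map_mul_map_congr hU.symm _ _ _ _ b⁻¹ a⁻¹
  · exact fun y hy => by simpa using (hU ▸ hy : y ∈ A ⊓ conjSub x⁻¹ B).1
  · exact fun y hy => (hU ▸ hy : y ∈ A ⊓ conjSub x⁻¹ B).2

lemma eq_burnsideInv {inv : BurnsideModule R F →ₗ[R] BurnsideModule R F}
    (hinv : ∀ (A : Subgroup G) (a : F.obj A), inv (gen R F A a) = gen R F A a⁻¹) :
    inv = burnsideInv R F :=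
  ext_gen fun A a => by rw [hinv, burnsideInv_gen]

lemma burnsideInv_involutive : Function.Involutive (burnsideInv R F) := by
  have h : burnsideInv R F ∘ₗ burnsideInv R F = LinearMap.id :=
    ext_gen fun A a => by
      simp only [LinearMap.comp_apply, burnsideInv_gen, inv_inv, LinearMap.id_apply]
  exact LinearMap.congr_fun h

end Inversion

section DoubleCosets

lemma exists_isDosetRep [Finite G] (A B : Subgroup G) : ∃ X : Finset G, IsDosetRep A B X := by
  let out : DoubleCoset.Quotient (A : Set G) B → G := Quotient.out
  refine ⟨(Set.range out).toFinite.toFinset, fun g => ⟨out (DoubleCoset.mk A B g), ?_, ?_⟩⟩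
  · exact ⟨by simp, (DoubleCoset.eq A B _ g).mp (DoubleCoset.out_eq' A B _)⟩
  · rintro _ ⟨hy, a, ha, b, hb, rfl⟩
    obtain ⟨q, rfl⟩ := by simpa using hy
    rw [← (DoubleCoset.eq A B _ _).mpr ⟨a, ha, b, hb, rfl⟩, DoubleCoset.out_eq' A B q]

lemma IsDosetRep.image_inv [DecidableEq G] {A B : Subgroup G} {X : Finset G}
    (hX : IsDosetRep A B X) : IsDosetRep B A (X.image fun x => x⁻¹) := by
  intro g
  obtain ⟨x, ⟨hxX, a, ha, b, hb, hg⟩, huniq⟩ := hX g⁻¹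
  refine ⟨x⁻¹, ⟨Finset.mem_image_of_mem _ hxX, b⁻¹, B.inv_mem hb, a⁻¹, A.inv_mem ha, ?_⟩, ?_⟩
  · rw [← inv_inv g, hg]
    group
  · rintro _ ⟨hyX, b', hb', a', ha', rfl⟩
    obtain ⟨z, hzX, rfl⟩ := Finset.mem_image.mp hyX
    rw [huniq z ⟨hzX, a'⁻¹, A.inv_mem ha', b'⁻¹, B.inv_mem hb', by group⟩]

end DoubleCosets

section Multiplication

variable {R : Type} [CommRing R] {F : ConjFunctorGrp G}
  {mul : BurnsideModule R F →ₗ[R] BurnsideModule R F →ₗ[R] BurnsideModule R F}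

lemma burnsideInv_mul_gen [Finite G] (hmul : MulFormula R F mul) (A B : Subgroup G)
    (a : F.obj A) (b : F.obj B) :
    burnsideInv R F (mul (gen R F A a) (gen R F B b)) = mul (gen R F B b⁻¹) (gen R F A a⁻¹) := by
  classical
  obtain ⟨X, hX⟩ := exists_isDosetRep A B
  rw [hmul A B a b X hX, map_sum, hmul B A b⁻¹ a⁻¹ _ hX.image_inv,
    Finset.sum_image fun x _ y _ h => inv_injective h]
  exact Finset.sum_congr rfl fun x _ => burnsideInv_prodTerm A B a b x

lemma burnsideInv_mul [Finite G] (hmul : MulFormula R F mul) (p q : BurnsideModule R F) :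
    burnsideInv R F (mul p q) = mul (burnsideInv R F q) (burnsideInv R F p) := by
  have h : mul.compr₂ (burnsideInv R F) =
      mul.flip.compl₁₂ (burnsideInv R F) (burnsideInv R F) :=
    ext_gen₂ fun A a B b => by
      simpa only [LinearMap.compr₂_apply, LinearMap.compl₁₂_apply, LinearMap.flip_apply,
        burnsideInv_gen] using burnsideInv_mul_gen hmul A B a b
  exact LinearMap.congr_fun₂ h p q

end Multiplication

/-- if `Φ` is valued in groups, the `R`-linear map on `P_R(G)` determined on
generators by `⟨a, A⟩ ↦ ⟨a⁻¹, A⟩` is well defined (exists and is unique), squares to the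
identity, and is an anti-automorphism of the `R`-algebra `P_R(G)` (for its double-coset
multiplication); in particular it is an involution of `P_R(G)`. -/
theorem burnside_involution (G : Type) [Group G] [Finite G] (R : Type) [CommRing R]
    (F : ConjFunctorGrp G) :
    (∃! inv : BurnsideModule R F →ₗ[R] BurnsideModule R F,
      ∀ (A : Subgroup G) (a : F.obj A), inv (gen R F A a) = gen R F A a⁻¹) ∧
    (∀ inv : BurnsideModule R F →ₗ[R] BurnsideModule R F,
      (∀ (A : Subgroup G) (a : F.obj A), inv (gen R F A a) = gen R F A a⁻¹) →
      (∀ p : BurnsideModule R F, inv (inv p) = p) ∧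
      Function.Bijective inv ∧
      (∀ mul : BurnsideModule R F →ₗ[R] BurnsideModule R F →ₗ[R] BurnsideModule R F,
        MulFormula R F mul →
        ∀ p q : BurnsideModule R F, inv (mul p q) = mul (inv q) (inv p))) := by
  refine ⟨⟨burnsideInv R F, burnsideInv_gen R F, fun _ => eq_burnsideInv⟩, fun inv hinv => ?_⟩
  obtain rfl := eq_burnsideInv hinv
  exact ⟨burnsideInv_involutive, burnsideInv_involutive.bijective,
    fun _ hmul => burnsideInv_mul hmul⟩
end

section
/- Let 𝕂 be a field of characteristic different from 2, G a finite group, and H ⊆ K ⊆ G subgroups such that the index [K : H] is odd and both H²(K, 𝕂ˣ) and H²(H, 𝕂ˣ) have order 2. Let τ be the nontrivial class of H²(K, 𝕂ˣ) and let α : H²(H, 𝕂ˣ) → {±1} be the nontrivial character (α of the trivial class is 1, α of the nontrivial class is −1). Then Σ α((c_g)*(τ)) = − |{ gK ∈ G/K : g⁻¹Hg ⊆ K }|, where the sum runs over those cosets gK ∈ G/K with g⁻¹Hg ⊆ K, (c_g)* denotes the pullback along the injective homomorphism H → K, h ↦ g⁻¹hg, and the sum is independent of the chosen coset representatives. (In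 the language of the extended Burnside ring this reads f'_H(⟨K'⟩) = − f_H(⟨K⟩).) -/
/-- A 2-cocycle on `K` with values in the trivial `K`-module `M`. -/
def IsTwoCocycle {K M : Type} [Group K] [CommGroup M] (θ : K → K → M) : Prop :=
  ∀ g h k : K, θ g h * θ (g * h) k = θ h k * θ g (h * k)

/-- A 2-coboundary on `K` with values in the trivial `K`-module `M`. -/
def IsTwoCoboundary {K M : Type} [Group K] [CommGroup M] (θ : K → K → M) : Prop :=
  ∃ f : K → M, ∀ g h : K, θ g h = f g * f h * (f (g * h))⁻¹

/-- Two cocycles define the same cohomology class. -/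
def Cohomologous {K M : Type} [Group K] [CommGroup M] (θ η : K → K → M) : Prop :=
  IsTwoCoboundary (fun g h => θ g h * (η g h)⁻¹)

/-- Restriction (pullback) of a 2-cocycle along a map `φ : H → K`. -/
def cocyclePullback {H K M : Type} (φ : H → K) (θ : K → K → M) : H → H → M :=
  fun a b => θ (φ a) (φ b)

/-- `H²(K, M)` has order 2: there is a non-coboundary cocycle `τ` and every
cocycle is cohomologous to `1` or to `τ`. -/
def H2OrderTwo (K M : Type) [Group K] [CommGroup M] : Prop :=
  ∃ τ : K → K → M, IsTwoCocycle τ ∧ ¬ IsTwoCoboundary τ ∧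
    ∀ θ : K → K → M, IsTwoCocycle θ → (IsTwoCoboundary θ ∨ Cohomologous θ τ)

/-!
If the restriction of `τ` to a subgroup `L` of odd index `n = 2m + 1` were trivial, then
corestriction back to `K` would show that `τ ^ n` is trivial, since corestriction after
restriction is multiplication by the index. As `H²(K, 𝕂ˣ)` has order two, `τ ^ 2` is trivial
too, hence so is `τ = τ ^ n * (τ ^ 2) ^ (-m)`, a contradiction. Applied to the images `x⁻¹ H x ≤ K`, which all have index `[K : H]`, this
shows that every summand equals `-1`.
-/

section Coboundaries

variable (K M : Type) [Group K] [CommGroup M]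

def twoCoboundaries : Subgroup (K → K → M) where
  carrier := {θ | IsTwoCoboundary θ}
  mul_mem' := by
    rintro θ η ⟨f, hf⟩ ⟨f', hf'⟩
    refine ⟨f * f', fun g h => ?_⟩
    simp only [Pi.mul_apply, hf, hf', mul_inv]
    ac_rfl
  one_mem' := ⟨1, fun _ _ => by simp⟩
  inv_mem' := by
    rintro θ ⟨f, hf⟩
    refine ⟨f⁻¹, fun g h => ?_⟩
    simp only [Pi.inv_apply, hf, mul_inv, inv_inv]

variable {K M}

theorem IsTwoCocycle.mul {θ η : K → K → M} (hθ : IsTwoCocycle θ) (hη : IsTwoCocycle η) :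
    IsTwoCocycle (θ * η) := by
  intro g h k
  simp only [Pi.mul_apply]
  rw [mul_mul_mul_comm, hθ, hη, mul_mul_mul_comm]

theorem H2OrderTwo.sq_mem_twoCoboundaries (hK : H2OrderTwo K M) {τ : K → K → M}
    (hτ : IsTwoCocycle τ) : τ ^ 2 ∈ twoCoboundaries K M := by
  obtain ⟨τ₀, -, -, hall⟩ := hK
  by_cases hτB : τ ∈ twoCoboundaries K M
  · exact pow_mem hτB 2
  have hττ₀ : τ * τ₀⁻¹ ∈ twoCoboundaries K M := (hall τ hτ).resolve_left hτB
  refine (hall _ (pow_two τ ▸ hτ.mul hτ)).resolve_right fun hτ₀ => absurd ?_ hτB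
  have hτ_eq : τ = τ ^ 2 * τ₀⁻¹ * (τ * τ₀⁻¹)⁻¹ := by group
  rw [hτ_eq]
  exact mul_mem hτ₀ (inv_mem hττ₀)

theorem IsTwoCocycle.eq_of_mul_eq_mul {τ : K → K → M} (hτ : IsTwoCocycle τ)
    {g h t t' t'' u v : K} (hu : t'' * u = g * t') (hv : t' * v = h * t) :
    τ u v = τ g h * (τ g t' / τ t'' u)⁻¹ * (τ h t / τ t' v)⁻¹
      * (τ (g * h) t / τ t'' (u * v)) := by
  have h₁ : τ u v = τ t'' u * τ (g * t') v / τ t'' (u * v) :=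
    eq_div_of_mul_eq' (by rw [← hu]; exact (hτ t'' u v).symm)
  have h₂ : τ (g * t') v = (τ g t')⁻¹ * (τ t' v * τ g (h * t)) :=
    eq_inv_mul_of_mul_eq (by rw [← hv]; exact hτ g t' v)
  have h₃ : τ g (h * t) = (τ h t)⁻¹ * (τ g h * τ (g * h) t) :=
    eq_inv_mul_of_mul_eq (hτ g h t).symm
  rw [h₁, h₂, h₃]
  simp only [div_eq_mul_inv, mul_inv, inv_inv]
  ac_rfl

theorem pullback_mem_twoCoboundaries_of_mulEquiv {H L : Type} [Group H] [Group L] (e : H ≃* L)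
    {θ : L → L → M} (hθ : cocyclePullback e θ ∈ twoCoboundaries H M) :
    θ ∈ twoCoboundaries L M := by
  obtain ⟨f, hf⟩ := hθ
  refine ⟨f ∘ e.symm, fun a b => ?_⟩
  simpa [cocyclePullback] using hf (e.symm a) (e.symm b)

end Coboundaries

theorem prod_comp_smul {G α M : Type} [Group G] [MulAction G α] [Fintype α] [CommMonoid M]
    (g : G) (F : α → M) : ∏ a, F (g • a) = ∏ a, F a :=
  Fintype.prod_equiv (MulAction.toPerm g) _ _ fun _ => rfl

namespace Subgroup

variable {K : Type} [Group K] (L : Subgroup K)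

noncomputable def schreier (g : K) (q : K ⧸ L) : L :=
  ⟨(g • q).out⁻¹ * (g * q.out), QuotientGroup.eq.mp <| by
    rw [QuotientGroup.out_eq']
    nth_rw 1 [← QuotientGroup.out_eq' q]
    rfl⟩

variable {L}

theorem out_smul_mul_schreier (g : K) (q : K ⧸ L) :
    (g • q).out * (L.schreier g q : K) = g * q.out :=
  mul_inv_cancel_left _ _

theorem schreier_mul (g h : K) (q : K ⧸ L) :
    L.schreier (g * h) q = L.schreier g (h • q) * L.schreier h q := by
  ext
  simp only [schreier, mul_smul, coe_mul]
  group

variable (L) {M : Type} [CommGroup M] [Fintype (K ⧸ L)]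

/-- Corestriction from `L` to `K`, computed with the transversal `Quotient.out`. -/
noncomputable def cores (η : L → L → M) : K → K → M :=
  fun g h => ∏ q : K ⧸ L, η (L.schreier g (h • q)) (L.schreier h q)

variable {L}

theorem cores_mem_twoCoboundaries {η : L → L → M} (hη : η ∈ twoCoboundaries L M) :
    L.cores η ∈ twoCoboundaries K M := by
  obtain ⟨f, hf⟩ := hη
  refine ⟨fun g => ∏ q, f (L.schreier g q), fun g h => ?_⟩
  simp only [cores, hf, ← schreier_mul, Finset.prod_mul_distrib, Finset.prod_inv_distrib]
  rw [prod_comp_smul h fun q => f (L.schreier g q)]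

theorem cohomologous_pow_index_cores_pullback {τ : K → K → M} (hτ : IsTwoCocycle τ) :
    Cohomologous (τ ^ L.index) (L.cores (cocyclePullback L.subtype τ)) := by
  set ψ : K ⧸ L → K → M := fun q g => τ g q.out / τ (g • q).out (L.schreier g q)
  have hterm (g h : K) (q : K ⧸ L) :
      cocyclePullback L.subtype τ (L.schreier g (h • q)) (L.schreier h q)
        = τ g h * (ψ (h • q) g)⁻¹ * (ψ q h)⁻¹ * ψ q (g * h) := by
    have key := hτ.eq_of_mul_eq_mul (g := g) (h := h) (t := q.out) (t' := (h • q).out)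
      (t'' := ((g * h) • q).out) (u := L.schreier g (h • q)) (v := L.schreier h q)
      (by rw [mul_smul]; exact out_smul_mul_schreier g (h • q)) (out_smul_mul_schreier h q)
    rw [← coe_mul, ← schreier_mul] at key
    simp only [ψ, mul_smul] at key ⊢
    exact key
  refine ⟨fun g => ∏ q, ψ q g, fun g h => ?_⟩
  simp only [Pi.pow_apply, cores, hterm, Finset.prod_mul_distrib,
    Finset.prod_inv_distrib, Finset.prod_const, Finset.card_univ, index_eq_card,
    Nat.card_eq_fintype_card]
  rw [prod_comp_smul h fun q => ψ q g]
  simp only [mul_inv, inv_inv, mul_assoc, mul_inv_cancel_left]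

end Subgroup

section Restriction

variable {K M : Type} [Group K] [CommGroup M]

theorem Subgroup.pow_index_mem_twoCoboundaries (L : Subgroup K) [L.FiniteIndex]
    {τ : K → K → M} (hτ : IsTwoCocycle τ)
    (hres : cocyclePullback L.subtype τ ∈ twoCoboundaries L M) :
    τ ^ L.index ∈ twoCoboundaries K M := by
  have := Fintype.ofFinite (K ⧸ L)
  have h : τ ^ L.index * (L.cores (cocyclePullback L.subtype τ))⁻¹ ∈ twoCoboundaries K M :=
    L.cohomologous_pow_index_cores_pullback hτ
  simpa using mul_mem h (L.cores_mem_twoCoboundaries hres)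

theorem Subgroup.pullback_subtype_notMem_twoCoboundaries (L : Subgroup K) (hL : Odd L.index)
    {τ : K → K → M} (hτ : IsTwoCocycle τ) (hsq : τ ^ 2 ∈ twoCoboundaries K M)
    (hτB : τ ∉ twoCoboundaries K M) :
    cocyclePullback L.subtype τ ∉ twoCoboundaries L M := by
  have : L.FiniteIndex := ⟨hL.pos.ne'⟩
  obtain ⟨m, hm⟩ := hL
  intro hres
  refine hτB ?_
  have hτ_eq : τ = τ ^ L.index * ((τ ^ 2) ^ m)⁻¹ := by
    rw [hm, ← pow_mul, pow_succ, mul_comm 2 m]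
    group
  rw [hτ_eq]
  exact mul_mem (L.pow_index_mem_twoCoboundaries hτ hres) (inv_mem (pow_mem hsq m))

theorem pullback_notMem_twoCoboundaries_of_injective {H : Type} [Group H] (φ : H →* K)
    (hφ : Function.Injective φ) (hodd : Odd φ.range.index)
    {τ : K → K → M} (hτ : IsTwoCocycle τ) (hsq : τ ^ 2 ∈ twoCoboundaries K M)
    (hτB : τ ∉ twoCoboundaries K M) :
    cocyclePullback φ τ ∉ twoCoboundaries H M := fun hres =>
  φ.range.pullback_subtype_notMem_twoCoboundaries hodd hτ hsq hτB <|
    pullback_mem_twoCoboundaries_of_mulEquiv (MonoidHom.ofInjective hφ) hres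

end Restriction

section Conjugation

variable {G : Type} [Group G] {H K : Subgroup G}

def conjInto (x : G) (hx : ∀ y ∈ H, x⁻¹ * y * x ∈ K) : H →* K where
  toFun y := ⟨x⁻¹ * y * x, hx y y.2⟩
  map_one' := by ext; simp
  map_mul' a b := by ext; simp only [MulMemClass.coe_mul]; group

theorem conjInto_injective (x : G) (hx : ∀ y ∈ H, x⁻¹ * y * x ∈ K) :
    Function.Injective (conjInto x hx) := fun a b hab => by
  simpa [conjInto] using congrArg Subtype.val hab

theorem Subgroup.index_eq_of_card_eq [Finite G] {A B : Subgroup G}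
    (h : Nat.card A = Nat.card B) : A.index = B.index :=
  Nat.eq_of_mul_eq_mul_left Nat.card_pos <| by rw [card_mul_index, h, card_mul_index]

theorem index_range_conjInto [Finite G] (hHK : H ≤ K) (x : G)
    (hx : ∀ y ∈ H, x⁻¹ * y * x ∈ K) :
    (conjInto x hx).range.index = (H.subgroupOf K).index :=
  Subgroup.index_eq_of_card_eq <| by
    rw [← Nat.card_congr (MonoidHom.ofInjective (conjInto_injective x hx)).toEquiv,
      Nat.card_congr (Subgroup.subgroupOfEquivOfLe hHK).toEquiv]

end Conjugation

open scoped Classical in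
theorem mark_of_nontrivial_class_general (𝕂 : Type) [Field 𝕂]
    (G : Type) [Group G] [Finite G] (H K : Subgroup G) (hHK : H ≤ K)
    (hodd : Odd (H.subgroupOf K).index)
    (hK2 : H2OrderTwo ↥K 𝕂ˣ)
    (τ : ↥K → ↥K → 𝕂ˣ) (hτc : IsTwoCocycle τ) (hτn : ¬ IsTwoCoboundary τ)
    (X : Finset G)
    (hX1 : ∀ x ∈ X, ∀ y ∈ H, x⁻¹ * y * x ∈ K) :
    (∑ x ∈ X.attach,
      (if IsTwoCoboundary (cocyclePullback
          (fun y : ↥H => (⟨(x : G)⁻¹ * y * x, hX1 x.1 x.2 y y.2⟩ : ↥K)) τ)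
        then (1 : ℤ) else -1)) = -(X.card : ℤ) := by
  have hsq := hK2.sq_mem_twoCoboundaries hτc
  have hterm (x : X) : (if IsTwoCoboundary (cocyclePullback
      (fun y : ↥H => (⟨(x : G)⁻¹ * y * x, hX1 x.1 x.2 y y.2⟩ : ↥K)) τ)
        then (1 : ℤ) else -1) = -1 := by
    have hodd' : Odd (conjInto (x : G) (hX1 x.1 x.2)).range.index := by
      rw [index_range_conjInto hHK]; exact hodd
    exact if_neg (pullback_notMem_twoCoboundaries_of_injective _ (conjInto_injective (x : G) _)
      hodd' hτc hsq hτn)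
  rw [Finset.sum_congr rfl fun x _ => hterm x]
  simp

open scoped Classical in
/-- for the nontrivial class `τ` of `H²(K,𝕂ˣ)` and the nontrivial character
`α` of `H²(H,𝕂ˣ)` (value `1` on the trivial class, i.e. on coboundaries, and `-1` on the
nontrivial class), summing `α` of the pullbacks of `τ` along `h ↦ x⁻¹hx` over a set `X` of
representatives of the cosets `gK` with `g⁻¹Hg ⊆ K` gives `-|X|`, i.e.
`f'_H(⟨K'⟩) = - f_H(⟨K⟩)`; the result is independent of the chosen representatives since
`X` is an arbitrary system of representatives. -/
theorem mark_of_nontrivial_class (𝕂 : Type) [Field 𝕂] (hchar : ringChar 𝕂 ≠ 2)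
    (G : Type) [Group G] [Finite G] (H K : Subgroup G) (hHK : H ≤ K)
    (hodd : Odd (H.subgroupOf K).index)
    (hK2 : H2OrderTwo ↥K 𝕂ˣ) (hH2 : H2OrderTwo ↥H 𝕂ˣ)
    (τ : ↥K → ↥K → 𝕂ˣ) (hτc : IsTwoCocycle τ) (hτn : ¬ IsTwoCoboundary τ)
    (X : Finset G)
    (hX1 : ∀ x ∈ X, ∀ y ∈ H, x⁻¹ * y * x ∈ K)
    (hX2 : ∀ g : G, (∀ y ∈ H, g⁻¹ * y * g ∈ K) →
      ∃! x : G, x ∈ X ∧ ∃ k ∈ K, g = x * k) :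
    (∑ x ∈ X.attach,
      (if IsTwoCoboundary (cocyclePullback
          (fun y : ↥H => (⟨(x : G)⁻¹ * y * x, hX1 x.1 x.2 y y.2⟩ : ↥K)) τ)
        then (1 : ℤ) else -1)) = -(X.card : ℤ) :=
  mark_of_nontrivial_class_general 𝕂 G H K hHK hodd hK2 τ hτc hτn X hX1
end
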